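/- Let n, k ≥ 1 be integers and let B ⊆ ℝ^n be a bounded set such that for every r ∈ [0,1]^n there exists a ∈ ℝ^n with {a + i·r : 1 ≤ i ≤ k} ⊆ B. Then dim_M B ≥ limsup_{N → ∞} ( log F'_{n,k}(N) / log N ). -/

import Mathlib

/-!
Fix `N` and a cover of `B` by `M = covNum B (1/N)` balls of radius `1/N`. For each
`d ∈ {0, …, N-1}^n` the hypothesis gives a progression `a + i • (d / N)` in `B`; scaling by `N` and
replacing `N • a` by its floor yields the integer progression `⌊N • a⌋ + i • d`, each term of which
lies within sup-distance `2` of `N • x` for the centre `x` of a ball containing the corresponding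
real term. So the integer points near the `N`-scaled centres, at most `5^n · M` of them, contain
`k`-term progressions with `N^n` distinct differences, and `F'_{n,k}(N) ≤ 5^n · covNum B (1/N)`.

Taking logarithms and dividing by `log N` gives the claim, once we know that `covNum B ε` grows
polynomially in `1/ε` (a grid cover), so that the real `limsup` defining `dimM B` is not the junk
value of an unbounded function.
-/

open Set Filter Bornology

/-- Covering number of `E` by open balls of radius `ε`. -/
noncomputable def covNum {X : Type*} [PseudoMetricSpace X] (E : Set X) (ε : ℝ) : ℕ∞ :=
  ⨅ (t : Finset X) (_ : E ⊆ ⋃ x ∈ t, Metric.ball x ε), (t.card : ℕ∞)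

/-- Upper Minkowski (box-counting) dimension. -/
noncomputable def dimM {X : Type*} [PseudoMetricSpace X] (E : Set X) : ℝ :=
  limsup (fun ε : ℝ => Real.log ((covNum E ε).toNat) / Real.log (1 / ε))
    (nhdsWithin 0 (Ioi 0))

/-- Packing dimension, as modified upper box dimension: the infimum of
`⨆ j, dimM (E j)` over countable covers of the set by bounded sets. -/
noncomputable def dimP {X : Type*} [PseudoMetricSpace X] (E : Set X) : ℝ :=
  sInf { a : ℝ | ∃ f : ℕ → Set X, (E ⊆ ⋃ j, f j) ∧ (∀ j, IsBounded (f j)) ∧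
    a = ⨆ j, dimM (f j) }

/-- `F'nk n k N` : the minimum cardinality of a finite set `A ⊆ ℤ^n` containing a `k`-term
arithmetic progression `{a + i·d : 1 ≤ i ≤ k}` for `N^n` distinct common differences `d ∈ ℤ^n`. -/
noncomputable def F'nk (n k N : ℕ) : ℕ :=
  sInf { m | ∃ A : Finset (Fin n → ℤ), A.card = m ∧ ∃ D : Finset (Fin n → ℤ),
    D.card = N ^ n ∧ ∀ d ∈ D, ∃ a : Fin n → ℤ, ∀ i ∈ Finset.Icc 1 k, a + (i : ℤ) • d ∈ A }

open Metric Real Topology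

lemma abs_sub_mul_floor_div_le {x s : ℝ} (hs : 0 < s) : |x - s * ⌊x / s⌋| ≤ s := by
  have hlow : s * ⌊x / s⌋ ≤ x := by
    calc s * ⌊x / s⌋ ≤ s * (x / s) := by gcongr; exact Int.floor_le _
      _ = x := mul_div_cancel₀ x hs.ne'
  have hup : x < s * ⌊x / s⌋ + s := by
    calc x = s * (x / s) := (mul_div_cancel₀ x hs.ne').symm
      _ < s * (⌊x / s⌋ + 1) := by gcongr; exact Int.lt_floor_add_one _
      _ = s * ⌊x / s⌋ + s := by ring
  rw [abs_le]
  constructor <;> linarith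

lemma abs_floor_mul_add_sub_le_two {N a b x : ℝ} (hN : 0 < N) (h : |a + b / N - x| < 1 / N) :
    |⌊N * a⌋ + b - N * x| ≤ 2 := by
  have hscaled : |N * a + b - N * x| < 1 := by
    have : N * a + b - N * x = N * (a + b / N - x) := by field_simp
    rwa [this, abs_mul, abs_of_pos hN, ← lt_div_iff₀' hN]
  have := Int.floor_le (N * a)
  have := Int.lt_floor_add_one (N * a)
  rw [abs_lt] at hscaled
  rw [abs_le]
  constructor <;> linarith

lemma log_natCast_le_of_le {m : ℕ} {x : ℝ} (hx : 1 ≤ x) (h : (m : ℝ) ≤ x) : log m ≤ log x := by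
  rcases m.eq_zero_or_pos with rfl | hm
  · simpa using log_nonneg hx
  · exact log_le_log (by exact_mod_cast hm) h

lemma log_natCast_le_add_of_le_mul {a b c : ℕ} (h : a ≤ b * c) : log a ≤ log b + log c := by
  rcases a.eq_zero_or_pos with rfl | ha
  · simpa using add_nonneg (log_natCast_nonneg b) (log_natCast_nonneg c)
  · have hb : b ≠ 0 := by rintro rfl; omega
    have hc : c ≠ 0 := by rintro rfl; omega
    calc log a ≤ log (b * c : ℕ) := log_le_log (by exact_mod_cast ha) (by exact_mod_cast h)
      _ = log b + log c := by push_cast; exact log_mul (by exact_mod_cast hb) (by exact_mod_cast hc)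

lemma limsup_le_limsup_of_le_add_comp {α β : Type*} {l : Filter α} {l' : Filter β}
    {u c : α → ℝ} {g : β → ℝ} {φ : α → β} (hφ : Tendsto φ l l')
    (hu : IsCoboundedUnder (· ≤ ·) l u) (hg : IsBoundedUnder (· ≤ ·) l' g)
    (hc : Tendsto c l (𝓝 0)) (h : ∀ᶠ x in l, u x ≤ c x + g (φ x)) :
    limsup u l ≤ limsup g l' := by
  refine le_of_forall_gt_imp_ge_of_dense fun b hb => ?_
  obtain ⟨b', hgb', hb'b⟩ := exists_between hb
  refine limsup_le_of_le hu ?_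
  filter_upwards [h, hφ.eventually (eventually_lt_of_limsup_lt hgb' hg),
    hc.eventually_lt_const (sub_pos.2 hb'b)] with x hx hgx hcx
  linarith

section CoveringNumber

variable {X : Type*} [PseudoMetricSpace X] {E : Set X} {ε : ℝ}

lemma covNum_le_card {t : Finset X} (ht : E ⊆ ⋃ x ∈ t, ball x ε) : covNum E ε ≤ t.card :=
  iInf₂_le t ht

lemma exists_cover_card_eq_covNum (h : covNum E ε ≠ ⊤) :
    ∃ t : Finset X, E ⊆ ⋃ x ∈ t, ball x ε ∧ t.card = (covNum E ε).toNat := by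
  have hcov : covNum E ε = ⨅ t : {t : Finset X // E ⊆ ⋃ x ∈ t, ball x ε}, (t.1.card : ℕ∞) :=
    iInf_subtype'
  have : Nonempty {t : Finset X // E ⊆ ⋃ x ∈ t, ball x ε} := by
    by_contra hempty
    rw [not_nonempty_iff] at hempty
    exact h (by rw [hcov, iInf_of_empty])
  obtain ⟨⟨t, ht⟩, hmin⟩ := ENat.exists_eq_iInf fun t : {t : Finset X // E ⊆ ⋃ x ∈ t, ball x ε} =>
    (t.1.card : ℕ∞)
  exact ⟨t, ht, by rw [hcov, ← hmin, ENat.toNat_natCast]⟩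

end CoveringNumber

section Euclidean

variable {n : ℕ}

lemma dist_le_sqrt_mul_of_abs_sub_le {x y : EuclideanSpace ℝ (Fin n)} {s : ℝ} (hs : 0 ≤ s)
    (h : ∀ j, |x j - y j| ≤ s) : dist x y ≤ √n * s := by
  rw [EuclideanSpace.dist_eq]
  calc √(∑ j, dist (x j) (y j) ^ 2) ≤ √(∑ _j : Fin n, s ^ 2) := by
        gcongr with j
        exact (Real.dist_eq _ _).trans_le (h j)
    _ = √n * s := by simp [Real.sqrt_mul, Real.sqrt_sq hs]

lemma exists_grid_cover {B : Set (EuclideanSpace ℝ (Fin n))} {R s : ℝ}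
    (hB : B ⊆ closedBall 0 R) (hs : 0 < s) :
    ∃ t : Finset (EuclideanSpace ℝ (Fin n)),
      B ⊆ ⋃ x ∈ t, closedBall x (√n * s) ∧ t.card ≤ (2 * ⌈R / s⌉₊ + 1) ^ n := by
  classical
  set m := ⌈R / s⌉₊
  let grid : (Fin n → ℤ) → EuclideanSpace ℝ (Fin n) := fun z => WithLp.toLp 2 fun j => s * z j
  refine ⟨(Fintype.piFinset fun _ => Finset.Icc (-(m : ℤ)) m).image grid, fun x hx => ?_, ?_⟩
  · have hxs : ∀ j, |x j / s| ≤ m := fun j => by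
      rw [abs_div, abs_of_pos hs, div_le_iff₀ hs]
      calc |x j| ≤ R := (PiLp.norm_apply_le x j).trans (mem_closedBall_zero_iff.1 (hB hx))
        _ ≤ m * s := (div_le_iff₀ hs).1 (Nat.le_ceil _)
    refine mem_iUnion₂.2 ⟨grid fun j => ⌊x j / s⌋, Finset.mem_image_of_mem _ ?_,
      mem_closedBall.2 (dist_le_sqrt_mul_of_abs_sub_le hs.le fun j => ?_)⟩
    · refine Fintype.mem_piFinset.2 fun j => Finset.mem_Icc.2 ⟨Int.le_floor.2 ?_, ?_⟩
      · push_cast; linarith [(abs_le.1 (hxs j)).1]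
      · exact (Int.floor_mono (abs_le.1 (hxs j)).2).trans_eq (Int.floor_natCast m)
    · simpa [grid] using abs_sub_mul_floor_div_le (x := x j) hs
  · refine Finset.card_image_le.trans (le_of_eq ?_)
    simp only [Fintype.card_piFinset, Int.card_Icc, Finset.prod_const, Finset.card_univ,
      Fintype.card_fin]
    congr 1
    omega

lemma covNum_le_of_subset_closedBall {B : Set (EuclideanSpace ℝ (Fin n))} {R ε : ℝ}
    (hB : B ⊆ closedBall 0 R) (hε : 0 < ε) :
    covNum B ε ≤ ((2 * ⌈R * (√n + 1) / ε⌉₊ + 1) ^ n : ℕ) := by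
  have hsn : 0 < √n + 1 := by positivity
  obtain ⟨t, ht, hcard⟩ := exists_grid_cover hB (div_pos hε hsn)
  have hball : √n * (ε / (√n + 1)) < ε := by
    rw [mul_div_assoc', div_lt_iff₀ hsn]
    nlinarith
  calc covNum B ε ≤ t.card := covNum_le_card fun x hx => by
        obtain ⟨c, hc, hxc⟩ := mem_iUnion₂.1 (ht hx)
        exact mem_iUnion₂.2 ⟨c, hc, closedBall_subset_ball hball hxc⟩
    _ ≤ _ := by
        rw [div_div_eq_mul_div] at hcard
        exact_mod_cast hcard

end Euclidean

section Lattice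

variable {n : ℕ}

noncomputable def latticeBox (y : Fin n → ℝ) : Finset (Fin n → ℤ) :=
  Fintype.piFinset fun j => Finset.Icc ⌈y j - 2⌉ ⌊y j + 2⌋

lemma mem_latticeBox {y : Fin n → ℝ} {z : Fin n → ℤ} :
    z ∈ latticeBox y ↔ ∀ j, |(z j : ℝ) - y j| ≤ 2 := by
  simp only [latticeBox, Fintype.mem_piFinset, Finset.mem_Icc, Int.ceil_le, Int.le_floor, abs_le]
  refine forall_congr' fun j => ?_
  constructor <;> rintro ⟨h₁, h₂⟩ <;> constructor <;> linarith

lemma card_latticeBox_le (y : Fin n → ℝ) : (latticeBox y).card ≤ 5 ^ n := by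
  rw [latticeBox, Fintype.card_piFinset]
  refine (Finset.prod_le_pow_card _ _ 5 fun j _ => ?_).trans_eq (by simp)
  have := Int.floor_le_ceil (y j)
  rw [Int.card_Icc, Int.floor_add_ofNat, Int.ceil_sub_ofNat]
  omega

end Lattice

section Progressions

variable {n k N : ℕ} {B : Set (EuclideanSpace ℝ (Fin n))}

lemma exists_int_progression_mem_latticeBoxes
    (hyp : ∀ r : EuclideanSpace ℝ (Fin n), (∀ i, r i ∈ Icc (0 : ℝ) 1) →
      ∃ a : EuclideanSpace ℝ (Fin n), ∀ i ∈ Finset.Icc 1 k, a + (i : ℝ) • r ∈ B)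
    (hN : 0 < N) {t : Finset (EuclideanSpace ℝ (Fin n))} (ht : B ⊆ ⋃ x ∈ t, ball x (1 / N))
    {d : Fin n → ℤ} (hd : ∀ j, d j ∈ Finset.Ico 0 (N : ℤ)) :
    ∃ a : Fin n → ℤ, ∀ i ∈ Finset.Icc 1 k,
      a + (i : ℤ) • d ∈ t.biUnion fun x => latticeBox fun j => N * x j := by
  have hN' : (0 : ℝ) < N := by exact_mod_cast hN
  obtain ⟨a, ha⟩ := hyp (WithLp.toLp 2 fun j => (d j : ℝ) / N) fun j => by
    obtain ⟨h₀, h₁⟩ := Finset.mem_Ico.1 (hd j)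
    have h₁' : (d j : ℝ) ≤ N := by exact_mod_cast h₁.le
    exact ⟨by positivity, by simpa only [PiLp.toLp_apply, div_le_one hN'] using h₁'⟩
  refine ⟨fun j => ⌊N * a j⌋, fun i hi => ?_⟩
  obtain ⟨x, hx, hdist⟩ := mem_iUnion₂.1 (ht (ha i hi))
  refine Finset.mem_biUnion.2 ⟨x, hx, mem_latticeBox.2 fun j => ?_⟩
  have hj : |a j + i * d j / N - x j| < 1 / N := by
    simpa [Real.dist_eq, mul_div_assoc] using (PiLp.dist_apply_le _ _ j).trans_lt (mem_ball.1 hdist)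
  simpa using abs_floor_mul_add_sub_le_two hN' hj

lemma F'nk_le_card_mul
    (hyp : ∀ r : EuclideanSpace ℝ (Fin n), (∀ i, r i ∈ Icc (0 : ℝ) 1) →
      ∃ a : EuclideanSpace ℝ (Fin n), ∀ i ∈ Finset.Icc 1 k, a + (i : ℝ) • r ∈ B)
    (hN : 0 < N) {t : Finset (EuclideanSpace ℝ (Fin n))} (ht : B ⊆ ⋃ x ∈ t, ball x (1 / N)) :
    F'nk n k N ≤ t.card * 5 ^ n := by
  classical
  let A := t.biUnion fun x => latticeBox fun j => N * x j
  calc F'nk n k N ≤ A.card :=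
        Nat.sInf_le ⟨A, rfl, Fintype.piFinset fun _ => Finset.Ico 0 (N : ℤ),
          by simp [Fintype.card_piFinset], fun d hd =>
            exists_int_progression_mem_latticeBoxes hyp hN ht (Fintype.mem_piFinset.1 hd)⟩
    _ ≤ t.card * 5 ^ n := Finset.card_biUnion_le_card_mul _ _ _ fun x _ => card_latticeBox_le _

end Progressions

section Dimension

variable {n : ℕ} {B : Set (EuclideanSpace ℝ (Fin n))}

lemma covNum_ne_top_of_isBounded (hB : IsBounded B) {ε : ℝ} (hε : 0 < ε) : covNum B ε ≠ ⊤ := by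
  obtain ⟨R, hR⟩ := hB.subset_closedBall 0
  exact ne_top_of_le_ne_top (ENat.natCast_ne_top _) (covNum_le_of_subset_closedBall hR hε)

lemma isBoundedUnder_log_covNum_div (hB : IsBounded B) :
    IsBoundedUnder (· ≤ ·) (𝓝[>] 0) fun ε => log (covNum B ε).toNat / log (1 / ε) := by
  obtain ⟨R, hR0, hR⟩ := hB.subset_closedBall_lt 0 0
  set C := 2 * (R * (√n + 1)) + 3 with hC_def
  have hC : 0 < C := by positivity
  refine ⟨2 * n, eventually_map.2 ?_⟩
  filter_upwards [Ioo_mem_nhdsGT (inv_pos.2 hC)] with ε ⟨hε, hεC⟩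
  have hCε : C ≤ 1 / ε := by rw [one_div]; exact (le_inv_comm₀ hε hC).1 hεC.le
  have hinv : 1 < 1 / ε := by nlinarith [Real.sqrt_nonneg n]
  have hlog : 0 < log (1 / ε) := log_pos hinv
  have hgrid : ((2 * ⌈R * (√n + 1) / ε⌉₊ + 1 : ℕ) : ℝ) ≤ (1 / ε) ^ 2 := by
    have := Nat.ceil_lt_add_one (div_nonneg (by positivity : 0 ≤ R * (√n + 1)) hε.le)
    calc ((2 * ⌈R * (√n + 1) / ε⌉₊ + 1 : ℕ) : ℝ) ≤ 2 * (R * (√n + 1) / ε) + 3 := by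
          push_cast; linarith
      _ ≤ C / ε := by
          have hε1 : ε < 1 := (one_lt_div hε).1 hinv
          rw [le_div_iff₀ hε, add_mul, mul_assoc, div_mul_cancel₀ _ hε.ne']
          linarith
      _ ≤ (1 / ε) ^ 2 := by
          rw [sq, div_eq_mul_one_div]
          gcongr
  have hcov : ((covNum B ε).toNat : ℝ) ≤ ((1 / ε) ^ 2) ^ n := by
    calc ((covNum B ε).toNat : ℝ) ≤ (((2 * ⌈R * (√n + 1) / ε⌉₊ + 1) ^ n : ℕ) : ℝ) := by
          exact_mod_cast ENat.toNat_le_of_le_natCast (covNum_le_of_subset_closedBall hR hε)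
      _ ≤ ((1 / ε) ^ 2) ^ n := by
          rw [Nat.cast_pow]
          exact pow_le_pow_left₀ (Nat.cast_nonneg _) hgrid n
  rw [div_le_iff₀ hlog]
  calc log (covNum B ε).toNat ≤ log (((1 / ε) ^ 2) ^ n) :=
        log_natCast_le_of_le (one_le_pow₀ (one_le_pow₀ hinv.le)) hcov
    _ = 2 * n * log (1 / ε) := by rw [log_pow, log_pow]; ring

end Dimension

theorem stmt8_general (n k : ℕ)
    (B : Set (EuclideanSpace ℝ (Fin n))) (hB : IsBounded B)
    (hyp : ∀ r : EuclideanSpace ℝ (Fin n), (∀ i, r i ∈ Icc (0 : ℝ) 1) →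
      ∃ a : EuclideanSpace ℝ (Fin n), ∀ i ∈ Finset.Icc 1 k, a + (i : ℝ) • r ∈ B) :
    limsup (fun N : ℕ => Real.log (F'nk n k N) / Real.log N) atTop ≤ dimM B := by
  refine limsup_le_limsup_of_le_add_comp
    (tendsto_inv_atTop_nhdsGT_zero.comp tendsto_natCast_atTop_atTop)
    (isCoboundedUnder_le_of_le atTop fun N =>
      div_nonneg (log_natCast_nonneg _) (log_natCast_nonneg _))
    (isBoundedUnder_log_covNum_div hB)
    (tendsto_const_nhds.div_atTop (tendsto_log_atTop.comp tendsto_natCast_atTop_atTop)) ?_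
    (c := fun N : ℕ => log (5 ^ n : ℕ) / log N)
  filter_upwards [eventually_gt_atTop 0] with N hN
  obtain ⟨t, ht, hcard⟩ :=
    exists_cover_card_eq_covNum (covNum_ne_top_of_isBounded hB (ε := (N : ℝ)⁻¹) (by positivity))
  have hF : F'nk n k N ≤ (covNum B (N : ℝ)⁻¹).toNat * 5 ^ n :=
    hcard ▸ F'nk_le_card_mul hyp hN (by simpa only [one_div] using ht)
  simp only [Function.comp_apply, one_div, inv_inv, ← add_div]
  exact div_le_div_of_nonneg_right (by linarith [log_natCast_le_add_of_le_mul hF])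
    (log_natCast_nonneg N)

/-- If a bounded `B ⊆ ℝ^n` contains a `k`-term arithmetic progression with every common
difference `r ∈ [0,1]^n`, then `dim_M B ≥ limsup_N (log F'_{n,k}(N) / log N)`. -/
theorem stmt8 (n k : ℕ) (hn : 1 ≤ n) (hk : 1 ≤ k)
    (B : Set (EuclideanSpace ℝ (Fin n))) (hB : IsBounded B)
    (hyp : ∀ r : EuclideanSpace ℝ (Fin n), (∀ i, r i ∈ Icc (0 : ℝ) 1) →
      ∃ a : EuclideanSpace ℝ (Fin n), ∀ i ∈ Finset.Icc 1 k, a + (i : ℝ) • r ∈ B) :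
    limsup (fun N : ℕ => Real.log (F'nk n k N) / Real.log N) atTop ≤ dimM B :=
  stmt8_general n k B hB hyp
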